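/- If G is a finite connected graph with gpg'(G) = 2, then gpg(G) = 2. -/
import Mathlib


open Finset SimpleGraph

variable {V : Type*}

/-- `S` is in general position in `G`: no shortest path of `G` contains more than
two vertices of `S`. -/
def IsGPSet (G : SimpleGraph V) (S : Set V) : Prop :=
  ∀ ⦃u v : V⦄ (p : G.Walk u v), p.IsPath → p.length = G.dist u v →
    (S ∩ {x | x ∈ p.support}).ncard ≤ 2

open scoped Classical in
/-- The set of vertices that can legally be played when the set of already selected
vertices is `S`. -/
noncomputable def playable [Fintype V] (G : SimpleGraph V) (S : Finset V) : Finset V :=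
  Finset.univ.filter (fun v => v ∉ S ∧ IsGPSet G (↑(insert v S) : Set V))

open scoped Classical in
/-- Value (final set size with optimal play) of the Builder-Blocker general position game
from position `S` with the given player to move (`true` = Builder, the maximiser;
`false` = Blocker, the minimiser), computed with a fuel parameter. -/
noncomputable def gameValAux [Fintype V] (G : SimpleGraph V) : ℕ → Bool → Finset V → ℕ
  | 0, _, S => S.card
  | fuel + 1, turn, S =>
    if h : (playable G S).Nonempty then
      if turn then (playable G S).sup' h (fun v => gameValAux G fuel (!turn) (insert v S))
      else (playable G S).inf' h (fun v => gameValAux G fuel (!turn) (insert v S))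
    else S.card

/-- Value of the Builder-Blocker general position game from position `S`,
with `turn = true` meaning Builder (the maximiser) is to move. Since at most
`Fintype.card V - S.card` further moves are possible, this fuel suffices. -/
noncomputable def gameVal [Fintype V] (G : SimpleGraph V) (turn : Bool) (S : Finset V) : ℕ :=
  gameValAux G (Fintype.card V - S.card) turn S

/-- The B-game general position number: Builder moves first. -/
noncomputable def gpg [Fintype V] (G : SimpleGraph V) : ℕ := gameVal G true ∅

/-- The B'-game general position number: Blocker moves first. -/
noncomputable def gpg' [Fintype V] (G : SimpleGraph V) : ℕ := gameVal G false ∅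

open scoped Classical

-- auxiliary lemmas

lemma gp_of_small [Fintype V] (G : SimpleGraph V) {S : Set V} (hS : S.ncard ≤ 2) :
    IsGPSet G S := fun _ _ p _ _ =>
  le_trans (Set.ncard_le_ncard Set.inter_subset_left (Set.toFinite S)) hS

lemma gp_of_card [Fintype V] (G : SimpleGraph V) {S : Finset V} (hS : S.card ≤ 2) :
    IsGPSet G (↑S : Set V) :=
  gp_of_small G (by rwa [Set.ncard_coe_finset])

lemma mem_playable [Fintype V] {G : SimpleGraph V} {S : Finset V} {v : V} :
    v ∈ playable G S ↔ v ∉ S ∧ IsGPSet G (↑(insert v S) : Set V) := by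
  classical
  simp [playable]

lemma card_lt_of_playable [Fintype V] {G : SimpleGraph V} {S : Finset V}
    (h : (playable G S).Nonempty) : S.card < Fintype.card V := by
  obtain ⟨v, hv⟩ := h
  have hvS := (mem_playable.mp hv).1
  calc S.card < Finset.univ.card := Finset.card_lt_card
        (Finset.ssubset_univ_iff.mpr (fun he => hvS (he ▸ Finset.mem_univ v)))
    _ = Fintype.card V := Finset.card_univ

lemma gameValAux_succ [Fintype V] (G : SimpleGraph V) (fuel : ℕ) (t : Bool) (S : Finset V) :
    gameValAux G (fuel + 1) t S =
      if h : (playable G S).Nonempty then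
        if t then (playable G S).sup' h (fun v => gameValAux G fuel (!t) (insert v S))
        else (playable G S).inf' h (fun v => gameValAux G fuel (!t) (insert v S))
      else S.card := rfl

lemma gameVal_of_empty [Fintype V] {G : SimpleGraph V} {S : Finset V}
    (h : playable G S = ∅) (t : Bool) : gameVal G t S = S.card := by
  unfold gameVal
  cases Fintype.card V - S.card with
  | zero => rfl
  | succ n => rw [gameValAux_succ, dif_neg (by simp [h])]

lemma card_le_gameValAux [Fintype V] (G : SimpleGraph V) (fuel : ℕ) :
    ∀ (t : Bool) (S : Finset V), S.card ≤ gameValAux G fuel t S := by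
  induction fuel with
  | zero => intro t S; exact le_rfl
  | succ n ih =>
    intro t S
    rw [gameValAux_succ]
    split
    · rename_i hne
      split
      · obtain ⟨v, hv⟩ := hne
        exact le_trans (le_trans (Finset.card_le_card (Finset.subset_insert v S))
          (ih (!t) (insert v S)))
          (Finset.le_sup' (fun v => gameValAux G n (!t) (insert v S)) hv)
      · exact Finset.le_inf' hne _ (fun b _ =>
          le_trans (Finset.card_le_card (Finset.subset_insert b S)) (ih _ _))
    · exact le_rfl

lemma card_le_gameVal [Fintype V] (G : SimpleGraph V) (t : Bool) (S : Finset V) :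
    S.card ≤ gameVal G t S := card_le_gameValAux G _ t S

lemma gameVal_step_true [Fintype V] {G : SimpleGraph V} {S : Finset V}
    (h : (playable G S).Nonempty) :
    gameVal G true S = (playable G S).sup' h (fun v => gameVal G false (insert v S)) := by
  have hlt := card_lt_of_playable h
  obtain ⟨n, hn⟩ : ∃ n, Fintype.card V - S.card = n + 1 := ⟨Fintype.card V - S.card - 1, by omega⟩
  unfold gameVal
  rw [hn, gameValAux_succ, dif_pos h, if_pos rfl]
  refine Finset.sup'_congr h rfl (fun v hv => ?_)
  have hvS : v ∉ S := (mem_playable.mp hv).1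
  have : Fintype.card V - (insert v S).card = n := by
    rw [Finset.card_insert_of_notMem hvS]; omega
  rw [this]
  rfl

lemma gameVal_step_false [Fintype V] {G : SimpleGraph V} {S : Finset V}
    (h : (playable G S).Nonempty) :
    gameVal G false S = (playable G S).inf' h (fun v => gameVal G true (insert v S)) := by
  have hlt := card_lt_of_playable h
  obtain ⟨n, hn⟩ : ∃ n, Fintype.card V - S.card = n + 1 := ⟨Fintype.card V - S.card - 1, by omega⟩
  unfold gameVal
  rw [hn, gameValAux_succ, dif_pos h, if_neg (by simp)]
  refine Finset.inf'_congr h rfl (fun v hv => ?_)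
  have hvS : v ∉ S := (mem_playable.mp hv).1
  have : Fintype.card V - (insert v S).card = n := by
    rw [Finset.card_insert_of_notMem hvS]; omega
  rw [this]
  rfl

/-- If `gpg'(G) = 2`, then `gpg(G) = 2`. -/
theorem stmt_12 {V : Type*} [Fintype V] (G : SimpleGraph V) (hG : G.Connected)
    (h : gpg' G = 2) : gpg G = 2 := by
  -- playable from ∅ is nonempty
  have hp0 : (playable G ∅).Nonempty := by
    by_contra h0
    rw [Finset.not_nonempty_iff_eq_empty] at h0
    have := gameVal_of_empty h0 false
    rw [gpg', this] at h
    simp at h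
  have hinf : (playable G ∅).inf' hp0 (fun v => gameVal G true (insert v ∅)) = 2 := by
    rw [gpg', gameVal_step_false hp0] at h
    exact h
  obtain ⟨v1, hv1mem, hv1⟩ := Finset.exists_mem_eq_inf' hp0
    (fun v => gameVal G true (insert v ∅))
  have hv1val : gameVal G true (insert v1 ∅) = 2 := by rw [← hv1, hinf]
  have hcard1 : (insert v1 (∅ : Finset V)).card = 1 := by simp
  have hp1 : (playable G (insert v1 ∅)).Nonempty := by
    by_contra h1
    rw [Finset.not_nonempty_iff_eq_empty] at h1
    rw [gameVal_of_empty h1, hcard1] at hv1val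
    omega
  have hsup : (playable G (insert v1 ∅)).sup' hp1
      (fun w => gameVal G false (insert w (insert v1 ∅))) = 2 := by
    rw [gameVal_step_true hp1] at hv1val
    exact hv1val
  -- pair cards
  have pairc : ∀ w : V, w ∉ insert v1 (∅ : Finset V) →
      Finset.card (insert w (insert v1 (∅ : Finset V))) = 2 := by
    intro w hw
    rw [Finset.card_insert_of_notMem hw, hcard1]
  -- key: every pair containing v1 is maximal
  have hstar : ∀ w : V, w ∉ insert v1 (∅ : Finset V) →
      playable G (insert w (insert v1 ∅)) = ∅ := by
    intro w hw
    have hwmem : w ∈ playable G (insert v1 ∅) :=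
      mem_playable.mpr ⟨hw, gp_of_card G (by rw [pairc w hw])⟩
    have hle : gameVal G false (insert w (insert v1 ∅)) ≤ 2 :=
      le_trans (Finset.le_sup' (fun w => gameVal G false (insert w (insert v1 ∅))) hwmem)
        (le_of_eq hsup)
    by_contra hne
    rw [← Finset.not_nonempty_iff_eq_empty, not_not] at hne
    have h3 : 3 ≤ gameVal G false (insert w (insert v1 ∅)) := by
      rw [gameVal_step_false hne]
      refine Finset.le_inf' hne _ (fun x hx => ?_)
      have hxP := (mem_playable.mp hx).1
      calc (3:ℕ) = Finset.card (insert x (insert w (insert v1 (∅ : Finset V)))) := by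
            rw [Finset.card_insert_of_notMem hxP, pairc w hw]
        _ ≤ _ := card_le_gameVal G true _
    omega
  -- every Builder first move is answered to value 2
  have hall : ∀ u ∈ playable G ∅, gameVal G false (insert u ∅) = 2 := by
    intro u hu
    have hcu : (insert u (∅ : Finset V)).card = 1 := by simp
    by_cases huv : u = v1
    · subst huv
      obtain ⟨w, hw⟩ := id hp1
      have hwU := (mem_playable.mp hw).1
      have hterm : playable G (insert w (insert u ∅)) = ∅ := hstar w hwU
      refine le_antisymm ?_ ?_
      · rw [gameVal_step_false hp1]
        refine le_trans (Finset.inf'_le _ hw) ?_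
        rw [gameVal_of_empty hterm, pairc w hwU]
      · rw [gameVal_step_false hp1]
        refine Finset.le_inf' hp1 _ (fun x hx => ?_)
        have hxU := (mem_playable.mp hx).1
        calc (2:ℕ) = Finset.card (insert x (insert u (∅ : Finset V))) := (pairc x hxU).symm
          _ ≤ _ := card_le_gameVal G true _
    · have hv1U : v1 ∉ insert u (∅ : Finset V) := by
        simp [Ne.symm huv]
      have hv1mem' : v1 ∈ playable G (insert u ∅) := by
        refine mem_playable.mpr ⟨hv1U, gp_of_card G ?_⟩
        rw [Finset.card_insert_of_notMem hv1U, hcu]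
      have hpu : (playable G (insert u ∅)).Nonempty := ⟨v1, hv1mem'⟩
      have huV : u ∉ insert v1 (∅ : Finset V) := by simp [huv]
      have hterm : playable G (insert v1 (insert u ∅)) = ∅ := by
        rw [Finset.insert_comm]
        exact hstar u huV
      refine le_antisymm ?_ ?_
      · rw [gameVal_step_false hpu]
        refine le_trans (Finset.inf'_le _ hv1mem') ?_
        rw [gameVal_of_empty hterm, Finset.card_insert_of_notMem hv1U, hcu]
      · rw [gameVal_step_false hpu]
        refine Finset.le_inf' hpu _ (fun x hx => ?_)
        have hxU := (mem_playable.mp hx).1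
        calc (2:ℕ) = Finset.card (insert x (insert u (∅ : Finset V))) := by
              rw [Finset.card_insert_of_notMem hxU, hcu]
          _ ≤ _ := card_le_gameVal G true _
  -- conclude
  rw [gpg, gameVal_step_true hp0]
  refine le_antisymm (Finset.sup'_le hp0 _ (fun u hu => (hall u hu).le)) ?_
  calc (2:ℕ) = gameVal G false (insert v1 ∅) := (hall v1 hv1mem).symm
    _ ≤ _ := Finset.le_sup' (fun v => gameVal G false (insert v ∅)) hv1mem
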